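/- arXiv:1505.00450 — 3 statements merged into one kernel-verified Lean document; each statement's English description precedes it below -/
import Mathlib

section
/- Let n_1 ≥ ... ≥ n_r and m_1 ≥ ... ≥ m_t be two partitions with conjugate parts n'_s = #{p : n_p ≥ s} and m'_s = #{q : m_q ≥ s}. Then Σ_{p=1}^{r} Σ_{q=1}^{t} min(n_p, 2·m_q) = Σ_{s ≥ 1} m'_s · ( n'_{2s-1} + n'_{2s} ). -/
/-!
Count `min(a, 2b)` as the number of `k ∈ [1, 2b]` with `k ≤ a`, and group these `k` in pairs
`(2s - 1, 2s)` with `1 ≤ s ≤ b`. Summing over all pairs `(p, q)` and moving the sum over `s` to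
the outside, the `q` with `s ≤ m_q` are counted by `m'_s` and the `p` with `2s - 1 ≤ n_p`
(resp. `2s ≤ n_p`) by `n'_{2s-1}` (resp. `n'_{2s}`).
-/

open Finset

lemma sum_Icc_one_ite_le_eq_min (a N : ℕ) :
    ∑ k ∈ Icc 1 N, (if k ≤ a then 1 else 0) = min a N := by
  have hfilter : {k ∈ Icc 1 N | k ≤ a} = Icc 1 (min a N) := by
    ext k
    simp only [mem_filter, mem_Icc]
    omega
  rw [sum_boole, hfilter, Nat.card_Icc, Nat.cast_id]
  omega

lemma sum_Icc_one_pair_eq_sum_Icc_two_mul {M : Type*} [AddCommMonoid M] (f : ℕ → M) (b : ℕ) :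
    ∑ s ∈ Icc 1 b, (f (2 * s - 1) + f (2 * s)) = ∑ k ∈ Icc 1 (2 * b), f k := by
  induction b with
  | zero => simp
  | succ b ih =>
    rw [sum_Icc_succ_top (by omega), ih, show 2 * (b + 1) - 1 = 2 * b + 1 by omega,
      show 2 * (b + 1) = 2 * b + 1 + 1 by ring, sum_Icc_succ_top (by omega),
      sum_Icc_succ_top (by omega), ← add_assoc]

lemma min_two_mul_eq_sum_Icc (a : ℕ) {b N : ℕ} (hb : b ≤ N) :
    min a (2 * b) = ∑ s ∈ Icc 1 N,
      if s ≤ b then (if 2 * s - 1 ≤ a then 1 else 0) + (if 2 * s ≤ a then 1 else 0) else 0 := by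
  have hfilter : {s ∈ Icc 1 N | s ≤ b} = Icc 1 b := by
    ext s
    simp only [mem_filter, mem_Icc]
    omega
  rw [← sum_filter, hfilter, sum_Icc_one_pair_eq_sum_Icc_two_mul (fun k => if k ≤ a then 1 else 0),
    sum_Icc_one_ite_le_eq_min]

theorem statement2_general (r t : ℕ) (n : Fin r → ℕ) (m : Fin t → ℕ) :
    ∑ p : Fin r, ∑ q : Fin t, min (n p) (2 * m q) =
      ∑ s ∈ Finset.Icc 1 (Finset.univ.sup m),
        ((Finset.univ.filter fun q : Fin t => s ≤ m q).card) *
          (((Finset.univ.filter fun p : Fin r => 2 * s - 1 ≤ n p).card) +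
            ((Finset.univ.filter fun p : Fin r => 2 * s ≤ n p).card)) := by
  calc ∑ p : Fin r, ∑ q : Fin t, min (n p) (2 * m q)
      = ∑ q : Fin t, ∑ p : Fin r, ∑ s ∈ Icc 1 (univ.sup m),
          if s ≤ m q then (if 2 * s - 1 ≤ n p then 1 else 0) + (if 2 * s ≤ n p then 1 else 0)
          else 0 := by
        rw [sum_comm]
        simp only [← min_two_mul_eq_sum_Icc _ (le_sup (mem_univ _))]
    _ = ∑ s ∈ Icc 1 (univ.sup m), ∑ q : Fin t,
          if s ≤ m q then ∑ p : Fin r,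
            ((if 2 * s - 1 ≤ n p then 1 else 0) + (if 2 * s ≤ n p then 1 else 0))
          else 0 := by
        simp only [sum_comm (s := univ (α := Fin r)), sum_ite_irrel, sum_const_zero]
        exact sum_comm
    _ = _ := by
        refine sum_congr rfl fun s _ => ?_
        rw [← sum_filter, sum_const, smul_eq_mul, sum_add_distrib]
        simp only [card_filter]

/-- For two partitions `n_1 ≥ … ≥ n_r` and `m_1 ≥ … ≥ m_t` with conjugate parts
`n'_s = #{p : n_p ≥ s}` and `m'_s = #{q : m_q ≥ s}`, we have
`Σ_p Σ_q min(n_p, 2 m_q) = Σ_{s≥1} m'_s (n'_{2s-1} + n'_{2s})`. -/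
theorem statement2 (r t : ℕ) (n : Fin r → ℕ) (m : Fin t → ℕ)
    (hnpos : ∀ p, 0 < n p) (hmpos : ∀ q, 0 < m q)
    (hndec : ∀ p q : Fin r, p ≤ q → n q ≤ n p)
    (hmdec : ∀ p q : Fin t, p ≤ q → m q ≤ m p) :
    ∑ p : Fin r, ∑ q : Fin t, min (n p) (2 * m q) =
      ∑ s ∈ Finset.Icc 1 (Finset.univ.sup m),
        ((Finset.univ.filter fun q : Fin t => s ≤ m q).card) *
          (((Finset.univ.filter fun p : Fin r => 2 * s - 1 ≤ n p).card) +
            ((Finset.univ.filter fun p : Fin r => 2 * s ≤ n p).card)) :=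
  statement2_general r t n m
end

section
/- In the ring of formal power series ℤ[[q, y]], the following identity holds: Π_{m ≥ 1} 1/(1 - q^m y) = Σ_{u ≥ 0} Σ_{r^(1) ≥ r^(2) ≥ ... ≥ r^(u) ≥ 1} q^{(r^(1))² + ... + (r^(u))²} · y^{r^(1) + ... + r^(u)} / ( (q)_{r^(1) - r^(2)} (q)_{r^(2) - r^(3)} ··· (q)_{r^(u-1) - r^(u)} (q)_{r^(u)} ), where (q)_n = (1-q)(1-q²)···(1-q^n) and (q)_0 = 1, and the empty sum for u = 0 contributes 1. -/
noncomputable instance : TopologicalSpace (MvPowerSeries (Fin 2) ℤ) :=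
  inferInstanceAs (TopologicalSpace ((Fin 2 →₀ ℕ) → ℤ))

noncomputable def qq : MvPowerSeries (Fin 2) ℤ := MvPowerSeries.X 0
noncomputable def yy : MvPowerSeries (Fin 2) ℤ := MvPowerSeries.X 1
noncomputable def qPoch (n : ℕ) : MvPowerSeries (Fin 2) ℤ :=
  ∏ i ∈ Finset.range n, (1 - qq ^ (i + 1))

def DualCharge : Type :=
  Σ u : ℕ, {f : Fin u → ℕ // (∀ i, 0 < f i) ∧ ∀ i j : Fin u, i ≤ j → f j ≤ f i}

open MvPowerSeries Finset

abbrev M := MvPowerSeries (Fin 2) ℤ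

noncomputable def fs (a b : ℕ) : Fin 2 →₀ ℕ := Finsupp.single 0 a + Finsupp.single 1 b

@[simp] lemma fs_apply_zero (a b : ℕ) : fs a b 0 = a := by simp [fs]
@[simp] lemma fs_apply_one (a b : ℕ) : fs a b 1 = b := by
  simp [fs, Finsupp.single_apply_eq_zero]

lemma eq_fs (d : Fin 2 →₀ ℕ) : d = fs (d 0) (d 1) := by
  ext i
  fin_cases i <;> simp

lemma fs_le_fs {a b a' b' : ℕ} : fs a b ≤ fs a' b' ↔ a ≤ a' ∧ b ≤ b' := by
  rw [Finsupp.le_def]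
  constructor
  · intro h; exact ⟨by simpa using h 0, by simpa using h 1⟩
  · rintro ⟨h1, h2⟩ i; fin_cases i <;> simpa

lemma fs_sub_fs (a b s t : ℕ) : fs a b - fs s t = fs (a - s) (b - t) := by
  ext i
  rw [Finsupp.tsub_apply]
  fin_cases i <;> simp

lemma fs_zero_zero : fs 0 0 = 0 := by simp [fs]

lemma qq_pow_mul_yy_pow (s t : ℕ) :
    qq ^ s * yy ^ t = MvPowerSeries.monomial (fs s t) 1 := by
  rw [qq, yy, MvPowerSeries.X_pow_eq, MvPowerSeries.X_pow_eq, fs]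
  rw [MvPowerSeries.monomial_mul_monomial, one_mul]

/-- Core coefficient-extraction lemma. -/
lemma coeff_qy_mul (a b s t : ℕ) (W : M) :
    (MvPowerSeries.coeff (fs a b)) (qq ^ s * yy ^ t * W) =
      if s ≤ a ∧ t ≤ b then (MvPowerSeries.coeff (fs (a - s) (b - t))) W else 0 := by
  rw [qq_pow_mul_yy_pow, MvPowerSeries.coeff_monomial_mul, fs_sub_fs]
  simp only [fs_le_fs, one_mul]

lemma coeff_qq_mul (a b s : ℕ) (W : M) :
    (MvPowerSeries.coeff (fs a b)) (qq ^ s * W) =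
      if s ≤ a then (MvPowerSeries.coeff (fs (a - s) b)) W else 0 := by
  have := coeff_qy_mul a b s 0 W
  simpa using this

lemma coeff_qq_mul_zero {a b s : ℕ} (h : a < s) (W : M) :
    (MvPowerSeries.coeff (fs a b)) (qq ^ s * W) = 0 := by
  rw [coeff_qq_mul, if_neg (by omega)]

/-! ### Units -/

lemma isUnit_of_constantCoeff_one {f : M} (h : MvPowerSeries.constantCoeff f = 1) :
    IsUnit f :=
  MvPowerSeries.isUnit_iff_constantCoeff.mpr (h ▸ isUnit_one)

@[simp] lemma constantCoeff_qq : MvPowerSeries.constantCoeff qq = 0 := by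
  simp [qq]

@[simp] lemma constantCoeff_yy : MvPowerSeries.constantCoeff yy = 0 := by
  simp [yy]

lemma isUnit_one_sub_qq_pow (n : ℕ) (h : 0 < n) : IsUnit (1 - qq ^ n : M) := by
  apply isUnit_of_constantCoeff_one
  rw [map_sub, map_one, map_pow, constantCoeff_qq, zero_pow h.ne', sub_zero]

lemma isUnit_one_sub_qq_pow_mul_yy (n : ℕ) : IsUnit (1 - qq ^ n * yy : M) := by
  apply isUnit_of_constantCoeff_one
  rw [map_sub, map_one, map_mul, constantCoeff_yy, mul_zero, sub_zero]

@[simp] lemma qPoch_zero : qPoch 0 = 1 := by simp [qPoch]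

lemma qPoch_succ (n : ℕ) : qPoch (n + 1) = qPoch n * (1 - qq ^ (n + 1)) := by
  rw [qPoch, qPoch, Finset.prod_range_succ]

lemma isUnit_qPoch (n : ℕ) : IsUnit (qPoch n) := by
  induction n with
  | zero => simp
  | succ m ih => rw [qPoch_succ]; exact ih.mul (isUnit_one_sub_qq_pow _ (Nat.succ_pos m))

lemma mul_inverse_cancel {u : M} (h : IsUnit u) : u * Ring.inverse u = 1 :=
  Ring.mul_inverse_cancel u h

lemma inverse_mul_inverse {u v : M} (hu : IsUnit u) (hv : IsUnit v) :
    Ring.inverse (u * v) = Ring.inverse u * Ring.inverse v :=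
  by rw [mul_comm]; exact Ring.mul_inverse_rev' (Commute.all v u)

/-! ### q-only series -/

def Qonly (f : M) : Prop := ∀ e : Fin 2 →₀ ℕ, e 1 ≠ 0 → MvPowerSeries.coeff e f = 0

lemma Qonly.one : Qonly 1 := by
  intro e he
  rw [MvPowerSeries.coeff_one]
  rw [if_neg]
  rintro rfl
  simp at he

lemma Qonly.sub {f g : M} (hf : Qonly f) (hg : Qonly g) : Qonly (f - g) := by
  intro e he; rw [map_sub, hf e he, hg e he, sub_zero]

lemma Qonly.add {f g : M} (hf : Qonly f) (hg : Qonly g) : Qonly (f + g) := by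
  intro e he; rw [map_add, hf e he, hg e he, add_zero]

lemma Qonly.mul {f g : M} (hf : Qonly f) (hg : Qonly g) : Qonly (f * g) := by
  classical
  intro e he
  rw [MvPowerSeries.coeff_mul]
  apply Finset.sum_eq_zero
  rintro ⟨u, v⟩ huv
  rw [Finset.HasAntidiagonal.mem_antidiagonal] at huv
  by_cases hu : u 1 = 0
  · have : v 1 ≠ 0 := by
      have : u 1 + v 1 = e 1 := by rw [← Finsupp.add_apply, huv]
      omega
    rw [hg v this, mul_zero]
  · rw [hf u hu, zero_mul]

lemma Qonly.qq : Qonly qq := by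
  intro e he
  rw [_root_.qq, MvPowerSeries.coeff_X]
  rw [if_neg]
  rintro rfl
  simp [Finsupp.single_apply] at he

lemma Qonly.pow {f : M} (hf : Qonly f) (n : ℕ) (hn : 0 < n) : Qonly (f ^ n) := by
  induction n with
  | zero => omega
  | succ m ih =>
    rcases Nat.eq_zero_or_pos m with rfl | hm
    · simpa using hf
    · rw [pow_succ]; exact (ih hm).mul hf

lemma Qonly.qPoch (n : ℕ) : Qonly (qPoch n) := by
  induction n with
  | zero => simpa using Qonly.one
  | succ m ih =>
    rw [qPoch_succ]
    exact ih.mul (Qonly.one.sub (Qonly.qq.pow _ (Nat.succ_pos m)))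

lemma Qonly.inverse {f : M} (hf : Qonly f) (hu : IsUnit f) : Qonly (Ring.inverse f) := by
  classical
  set g := Ring.inverse f with hg
  have hfg : f * g = 1 := mul_inverse_cancel hu
  have hc : IsUnit (MvPowerSeries.constantCoeff f) :=
    MvPowerSeries.isUnit_iff_constantCoeff.mp hu
  -- strong induction on e 0
  suffices H : ∀ n : ℕ, ∀ e : Fin 2 →₀ ℕ, e 0 ≤ n → e 1 ≠ 0 → MvPowerSeries.coeff e g = 0 by
    intro e he; exact H (e 0) e le_rfl he
  intro n
  induction n with
  | zero =>
    intro e he0 he1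
    -- from coeff e (f*g) = 0
    have h1 : MvPowerSeries.coeff e (f * g) = 0 := by
      rw [hfg, MvPowerSeries.coeff_one, if_neg]
      rintro rfl; simp at he1
    rw [MvPowerSeries.coeff_mul] at h1
    -- every term with u ≠ 0 vanishes
    have h2 : ∀ p ∈ Finset.HasAntidiagonal.antidiagonal e, p ≠ ((0 : Fin 2 →₀ ℕ), e) →
        MvPowerSeries.coeff p.1 f * MvPowerSeries.coeff p.2 g = 0 := by
      rintro ⟨u, v⟩ huv hne
      rw [Finset.HasAntidiagonal.mem_antidiagonal] at huv
      by_cases hu1 : u 1 = 0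
      · by_cases hu0 : u 0 = 0
        · exfalso; apply hne
          have hu : u = 0 := by ext i; fin_cases i <;> simpa
          simp [hu] at huv ⊢; exact huv
        · exfalso
          have : u 0 + v 0 = e 0 := by rw [← Finsupp.add_apply, huv]
          omega
      · rw [hf u hu1, zero_mul]
    rw [Finset.sum_eq_single ((0 : Fin 2 →₀ ℕ), e)] at h1
    · have he' : MvPowerSeries.coeff (0 : Fin 2 →₀ ℕ) f *
          MvPowerSeries.coeff e g = 0 := h1
      have := hc
      rw [MvPowerSeries.coeff_zero_eq_constantCoeff] at he'
      exact (IsUnit.mul_right_eq_zero this).mp he'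
    · intro p hp hne; exact h2 p hp hne
    · intro h; exact absurd (Finset.HasAntidiagonal.mem_antidiagonal.mpr (zero_add e)) h
  | succ n ih =>
    intro e he0 he1
    have h1 : MvPowerSeries.coeff e (f * g) = 0 := by
      rw [hfg, MvPowerSeries.coeff_one, if_neg]
      rintro rfl; simp at he1
    rw [MvPowerSeries.coeff_mul] at h1
    have h2 : ∀ p ∈ Finset.HasAntidiagonal.antidiagonal e, p ≠ ((0 : Fin 2 →₀ ℕ), e) →
        MvPowerSeries.coeff p.1 f * MvPowerSeries.coeff p.2 g = 0 := by
      rintro ⟨u, v⟩ huv hne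
      rw [Finset.HasAntidiagonal.mem_antidiagonal] at huv
      by_cases hu1 : u 1 = 0
      · by_cases hu0 : u 0 = 0
        · exfalso; apply hne
          have hu : u = 0 := by ext i; fin_cases i <;> simpa
          simp [hu] at huv ⊢; exact huv
        · -- v 0 < e 0, v 1 = e 1 ≠ 0
          have hv0 : u 0 + v 0 = e 0 := by rw [← Finsupp.add_apply, huv]
          have hv1 : u 1 + v 1 = e 1 := by rw [← Finsupp.add_apply, huv]
          rw [ih v (by omega) (by omega), mul_zero]
      · rw [hf u hu1, zero_mul]
    rw [Finset.sum_eq_single ((0 : Fin 2 →₀ ℕ), e)] at h1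
    · rw [MvPowerSeries.coeff_zero_eq_constantCoeff] at h1
      exact (IsUnit.mul_right_eq_zero hc).mp h1
    · intro p hp hne; exact h2 p hp hne
    · intro h; exact absurd (Finset.HasAntidiagonal.mem_antidiagonal.mpr (zero_add e)) h

lemma Qonly.coeff_fs {f : M} (hf : Qonly f) {a b : ℕ} (hb : b ≠ 0) :
    MvPowerSeries.coeff (fs a b) f = 0 := hf _ (by simpa)

/-! ### Gaussian binomials -/

noncomputable def gb : ℕ → ℕ → M
  | _, 0 => 1
  | 0, _+1 => 0
  | n+1, k+1 => gb n k + qq^(k+1) * gb n (k+1)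

@[simp] lemma gb_zero_right (n : ℕ) : gb n 0 = 1 := by cases n <;> rfl

@[simp] lemma gb_zero_succ (k : ℕ) : gb 0 (k+1) = 0 := rfl

lemma gb_pascal (n k : ℕ) : gb (n+1) (k+1) = gb n k + qq^(k+1) * gb n (k+1) := rfl

lemma gb_eq_zero : ∀ {n k : ℕ}, n < k → gb n k = 0 := by
  intro n
  induction n with
  | zero => intro k hk; match k, hk with | k+1, _ => rfl
  | succ m ih =>
    intro k hk
    match k, hk with
    | k+1, hk =>
      rw [gb_pascal, ih (by omega), ih (by omega), mul_zero, add_zero]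

@[simp] lemma gb_self : ∀ n : ℕ, gb n n = 1 := by
  intro n
  induction n with
  | zero => rfl
  | succ m ih => rw [gb_pascal, ih, gb_eq_zero (by omega), mul_zero, add_zero]

lemma gb_one (n : ℕ) : gb n 1 = ∑ i ∈ Finset.range n, qq ^ i := by
  induction n with
  | zero => simp
  | succ m ih =>
    rw [gb_pascal, ih, gb_zero_right, geom_sum_succ]
    ring

lemma gb_pascal2 : ∀ n k : ℕ, gb (n+1) (k+1) = qq^(n-k) * gb n k + gb n (k+1) := by
  intro n
  induction n with
  | zero =>
    intro k
    cases k with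
    | zero => rw [gb_pascal]; simp
    | succ j => rw [gb_pascal]; simp
  | succ m ih =>
    intro k
    cases k with
    | zero =>
      rw [gb_one, gb_one, gb_zero_right, mul_one, Nat.sub_zero, geom_sum_succ']
    | succ j =>
      rcases lt_or_ge j m with hj | hj
      · have hp : m - j = (m - (j+1)) + 1 := by omega
        have e1 : gb m j + qq^(j+1) * gb m (j+1)
            = qq^((m - (j+1)) + 1) * gb m j + gb m (j+1) := by
          rw [← hp, ← gb_pascal, ih j]
        have e2 : gb m (j+1) + qq^(j+1+1) * gb m (j+1+1)
            = qq^(m-(j+1)) * gb m (j+1) + gb m (j+1+1) := by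
          rw [← gb_pascal, ih (j+1)]
        rw [show m+1-(j+1) = m - (j+1) + 1 from by omega, gb_pascal (m+1),
          gb_pascal m (j+1), gb_pascal m j]
        linear_combination e1 + qq^(j+1+1) * e2
      · have hz1 : gb m (j+1) = 0 := gb_eq_zero (by omega)
        have hz2 : gb m (j+2) = 0 := gb_eq_zero (by omega)
        rcases eq_or_lt_of_le hj with rfl | hj'
        · rw [gb_pascal, gb_pascal, hz1, gb_pascal, hz1, hz2]
          simp
        · have hz0 : gb m j = 0 := gb_eq_zero (by omega)
          rw [gb_pascal, gb_pascal, gb_pascal, hz0, hz1, hz2]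
          simp

lemma gb_symm : ∀ n k : ℕ, k ≤ n → gb n (n - k) = gb n k := by
  intro n
  induction n with
  | zero => intro k hk; interval_cases k; rfl
  | succ m ih =>
    intro k hk
    cases k with
    | zero => simp
    | succ j =>
      rcases eq_or_lt_of_le hk with h | h
      · rw [← h]; simp
      · have hjm : j + 1 ≤ m := by omega
        rw [show m+1-(j+1) = (m-(j+1))+1 from by omega, gb_pascal, gb_pascal2,
          show m - (j+1) + 1 = m - j from by omega, ih (j+1) (by omega), ih j (by omega)]
        ring

lemma qPoch_gb : ∀ n k : ℕ, k ≤ n → gb n k * (qPoch k * qPoch (n - k)) = qPoch n := by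
  intro n
  induction n with
  | zero => intro k hk; interval_cases k; simp
  | succ m ih =>
    intro k hk
    cases k with
    | zero => simp
    | succ j =>
      rcases eq_or_lt_of_le hk with h | h
      · rw [← h]; simp
      · have hjm : j + 1 ≤ m := by omega
        have h1 : m + 1 - (j + 1) = (m - (j+1)) + 1 := by omega
        have e1 := ih j (by omega)
        have e2 := ih (j+1) hjm
        have h2 : m - j = m - (j+1) + 1 := by omega
        rw [h2] at e1
        have h3 : qq^(j+1) * qq^(m - (j+1) + 1) = qq^(m+1) := by
          rw [← pow_add]; congr 1; omega
        rw [gb_pascal, h1, qPoch_succ (m - (j+1)), qPoch_succ j, qPoch_succ m]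
        have expand : (gb m j + qq^(j+1) * gb m (j+1)) *
            (qPoch j * (1 - qq^(j+1)) * (qPoch (m - (j+1)) * (1 - qq^(m - (j+1) + 1))))
            = (1 - qq^(j+1)) * (gb m j * (qPoch j * (qPoch (m - (j+1)) * (1 - qq^(m - (j+1) + 1)))))
            + (qq^(j+1) * (1 - qq^(m - (j+1) + 1))) * (gb m (j+1) * (qPoch j * (1 - qq^(j+1)) * qPoch (m - (j+1)))) := by
          ring
        rw [expand]
        have e1' : gb m j * (qPoch j * (qPoch (m - (j + 1)) * (1 - qq ^ (m - (j + 1) + 1))))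
            = qPoch m := by
          rw [← e1, qPoch_succ (m - (j+1))]; try ring
        have e2' : gb m (j+1) * (qPoch j * (1 - qq^(j+1)) * qPoch (m - (j+1))) = qPoch m := by
          rw [← e2, qPoch_succ j]; try ring
        rw [e1', e2']
        have h4 : qq ^ (j + 1) * (1 - qq ^ (m - (j + 1) + 1)) = qq^(j+1) - qq^(m+1) := by
          rw [mul_sub, mul_one, h3]
        rw [h4]
        ring

/-- The master q-binomial summation identity. -/
lemma gen_sum (F : ℕ → ℕ → M)
    (hF : ∀ m j, F (m+1) (j+1) = F m j + qq^(j+1) * F m (j+1)) :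
    ∀ b, 1 ≤ b → ∀ m t, ∑ i ∈ Finset.range b, qq^(i*(i+1+t)) * gb (b-1) i * F m (i+1+t)
      = F (m + b - 1) (b + t) := by
  intro b
  induction b with
  | zero => omega
  | succ c ihc =>
    intro _ m t
    rcases Nat.eq_zero_or_pos c with rfl | hc
    · simp
    · obtain ⟨c', rfl⟩ : ∃ c', c = c' + 1 := ⟨c - 1, by omega⟩
      set Common : M :=
        (∑ i ∈ Finset.range (c'+1), qq^((i+1)*(i+2+t)) * gb c' i * F m (i+2+t))
        + (∑ i ∈ Finset.range (c'+1), qq^(i*(i+2+t)) * gb c' i * F m (i+1+t)) with hCommon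
      have S2eq : ∑ i ∈ Finset.range (c'+1), qq^(i*(i+2+t)) * gb c' i * F m (i+1+t)
          = (∑ i ∈ Finset.range (c'+1),
              qq^((i+1)*(i+2+t)+(i+1)) * gb c' (i+1) * F m (i+2+t)) + F m (1+t) := by
        rw [Finset.sum_range_succ' (fun i => qq^(i*(i+2+t)) * gb c' i * F m (i+1+t)) c']
        rw [Finset.sum_range_succ (fun i => qq^((i+1)*(i+2+t)+(i+1)) * gb c' (i+1) * F m (i+2+t)) c']
        rw [gb_eq_zero (show c' < c' + 1 by omega)]
        simp only [mul_zero, zero_mul, add_zero, gb_zero_right, Nat.zero_mul, pow_zero, one_mul,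
          mul_one, Nat.zero_add]
        congr 1
        apply Finset.sum_congr rfl
        intro i _
        congr 2
        ring
      have lhs_eq : ∑ i ∈ Finset.range (c'+1+1), qq^(i*(i+1+t)) * gb (c'+1) i * F m (i+1+t)
          = Common := by
        rw [Finset.sum_range_succ' (fun i => qq^(i*(i+1+t)) * gb (c'+1) i * F m (i+1+t)) (c'+1)]
        have term_expand : ∀ i, qq^((i+1)*(i+1+1+t)) * gb (c'+1) (i+1) * F m (i+1+1+t)
            = qq^((i+1)*(i+2+t)) * gb c' i * F m (i+2+t)
              + qq^((i+1)*(i+2+t)+(i+1)) * gb c' (i+1) * F m (i+2+t) := by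
          intro i
          rw [gb_pascal]
          rw [show (i+1)*(i+1+1+t) = (i+1)*(i+2+t) from by ring,
              show i+1+1+t = i+2+t from by ring]
          rw [mul_add, add_mul]
          congr 2
          rw [← mul_assoc, ← pow_add]
        rw [Finset.sum_congr rfl (fun i _ => term_expand i), Finset.sum_add_distrib]
        rw [hCommon, S2eq]
        simp only [Nat.zero_mul, pow_zero, one_mul, gb_zero_right, Nat.zero_add, mul_one]
        ring
      have rhs_eq : ∑ i ∈ Finset.range (c'+1), qq^(i*(i+1+(t+1))) * gb (c'+1-1) i * F (m+1) (i+1+(t+1))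
          = Common := by
        have term_expand : ∀ i, qq^(i*(i+1+(t+1))) * gb (c'+1-1) i * F (m+1) (i+1+(t+1))
            = qq^((i+1)*(i+2+t)) * gb c' i * F m (i+2+t)
              + qq^(i*(i+2+t)) * gb c' i * F m (i+1+t) := by
          intro i
          rw [show i+1+(t+1) = (i+1+t)+1 from by ring, hF,
              show c'+1-1 = c' from by omega,
              show i+1+t+1 = i+2+t from by ring]
          rw [show (i+1)*(i+2+t) = i*(i+2+t) + (i+2+t) from by ring, pow_add]
          ring
        rw [Finset.sum_congr rfl (fun i _ => term_expand i), Finset.sum_add_distrib, hCommon]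
      have step := rhs_eq.trans lhs_eq.symm
      calc ∑ i ∈ Finset.range (c'+1+1), qq^(i*(i+1+t)) * gb (c'+1+1-1) i * F m (i+1+t)
          = ∑ i ∈ Finset.range (c'+1), qq^(i*(i+1+(t+1))) * gb (c'+1-1) i * F (m+1) (i+1+(t+1)) := by
            rw [show c'+1+1-1 = c'+1 from by omega]
            exact (step).symm
        _ = F (m+1 + (c'+1) - 1) (c'+1+(t+1)) := ihc hc (m+1) (t+1)
        _ = F (m + (c'+1+1) - 1) (c'+1+1+t) := by
              rw [show m+1+(c'+1)-1 = m+(c'+1+1)-1 from by omega,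
                show c'+1+(t+1) = c'+1+1+t from by omega]

lemma inverse_eq_of_mul_eq_one {u a : M} (hu : IsUnit u) (h : u * a = 1) :
    Ring.inverse u = a := by
  have := Ring.inverse_mul_cancel u hu
  calc Ring.inverse u = Ring.inverse u * (u * a) := by rw [h, mul_one]
    _ = (Ring.inverse u * u) * a := by ring
    _ = a := by rw [this, one_mul]

lemma inv_qPoch_succ (j : ℕ) :
    Ring.inverse (qPoch j) = (1 - qq^(j+1)) * Ring.inverse (qPoch (j+1)) := by
  apply inverse_eq_of_mul_eq_one (isUnit_qPoch j)
  have : qPoch j * ((1 - qq^(j+1)) * Ring.inverse (qPoch (j+1)))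
      = qPoch (j+1) * Ring.inverse (qPoch (j+1)) := by
    rw [qPoch_succ]; ring
  rw [this, mul_inverse_cancel (isUnit_qPoch (j+1))]

lemma diamond (b n t : ℕ) (hb : 1 ≤ b) :
    ∑ i ∈ Finset.range b, qq^(i*(i+1+t)) * gb (b-1) i * gb n (i+1+t)
      = gb (n+b-1) (b+t) :=
  gen_sum gb (fun m j => gb_pascal m j) b hb n t

lemma clubs (b t : ℕ) (hb : 1 ≤ b) :
    ∑ i ∈ Finset.range b, qq^(i*(i+1+t)) * gb (b-1) i * Ring.inverse (qPoch (i+1+t))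
      = Ring.inverse (qPoch (b+t)) := by
  have h := gen_sum (fun _ j => Ring.inverse (qPoch j))
    (fun m j => by
      rw [inv_qPoch_succ j]
      ring) b hb 0 t
  simpa using h

/-! ### Euler: the finite q-binomial series -/

noncomputable def pProd (N : ℕ) : M := ∏ m ∈ Finset.range N, Ring.inverse (1 - qq^(m+1)*yy)

noncomputable def eulerF (N : ℕ) : M :=
  fun d => (MvPowerSeries.coeff (fs (d 0) 0)) (qq ^ (d 1) * gb (N + d 1 - 1) (d 1))

lemma coeff_eulerF (N a b : ℕ) :
    MvPowerSeries.coeff (fs a b) (eulerF N)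
      = (MvPowerSeries.coeff (fs a 0)) (qq ^ b * gb (N + b - 1) b) := by
  rw [MvPowerSeries.coeff_apply (R := ℤ) (eulerF N) (fs a b)]
  show (MvPowerSeries.coeff (fs ((fs a b) 0) 0)) (qq ^ ((fs a b) 1) * gb (N + (fs a b) 1 - 1) ((fs a b) 1)) = _
  rw [fs_apply_zero, fs_apply_one]

lemma eulerF_zero : eulerF 0 = 1 := by
  apply MvPowerSeries.ext
  intro d
  rw [eq_fs d, coeff_eulerF]
  rcases Nat.eq_zero_or_pos (d 1) with h1 | h1
  · rw [h1]
    simp only [pow_zero, one_mul, Nat.zero_add, gb_zero_right]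
  · rw [gb_eq_zero (show 0 + d 1 - 1 < d 1 by omega), mul_zero, map_zero,
      MvPowerSeries.coeff_one, if_neg]
    intro h; have := congrArg (fun e => e 1) h; simp at this; omega

lemma gb_pascal_shift (N b' : ℕ) :
    qq^(b'+1) * gb (N+b'+1) (b'+1)
      = qq^(b'+1) * gb (N+b') (b'+1) + qq^(b'+1+N) * gb (N+b') b' := by
  rw [gb_pascal2, show N+b'-b' = N from by omega, mul_add, ← mul_assoc, ← pow_add]
  ring

lemma eulerF_mul (N : ℕ) : eulerF (N+1) * (1 - qq^(N+1)*yy) = eulerF N := by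
  apply MvPowerSeries.ext
  intro d
  rw [eq_fs d]
  generalize d 0 = a
  generalize d 1 = b
  have mono : qq^(N+1) * yy = MvPowerSeries.monomial (fs (N+1) 1) 1 := by
    rw [← pow_one yy, qq_pow_mul_yy_pow]
  rw [mul_sub, mul_one, map_sub, mono, MvPowerSeries.coeff_mul_monomial, mul_one, fs_sub_fs]
  rcases Nat.eq_zero_or_pos b with hb | hb
  · rw [hb]
    rw [if_neg (by rw [fs_le_fs]; omega)]
    rw [coeff_eulerF, coeff_eulerF]
    simp
  · -- b ≥ 1
    obtain ⟨b', rfl⟩ : ∃ b', b = b' + 1 := ⟨b - 1, by omega⟩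
    simp only [coeff_eulerF, Nat.add_sub_cancel]
    rw [show N + 1 + (b'+1) - 1 = N + b' + 1 from by omega,
        show N + 1 + b' - 1 = N + b' from by omega,
        show N + (b'+1) - 1 = N + b' from by omega]
    rw [gb_pascal_shift, map_add]
    have key : (MvPowerSeries.coeff (fs a 0)) (qq^(b'+1+N) * gb (N+b') b')
        = if fs (N+1) 1 ≤ fs a (b'+1) then
            (MvPowerSeries.coeff (fs (a - (N+1)) 0)) (qq^b' * gb (N+b') b') else 0 := by
      rw [coeff_qq_mul, coeff_qq_mul]
      by_cases h : fs (N+1) 1 ≤ fs a (b'+1)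
      · have h' : N + 1 ≤ a := by
          rw [fs_le_fs] at h; exact h.1
        rw [if_pos h]
        by_cases h2 : b'+1+N ≤ a
        · rw [if_pos h2, if_pos (by omega), show a - (b'+1+N) = a - (N+1) - b' from by omega]
        · rw [if_neg h2, if_neg (by omega)]
      · have h' : ¬ (N + 1 ≤ a) := by
          rw [fs_le_fs] at h; omega
        rw [if_neg h, if_neg (by omega)]
    rw [key]
    ring

lemma pProd_eq_eulerF (N : ℕ) : pProd N = eulerF N := by
  induction N with
  | zero => rw [pProd, eulerF_zero]; simp
  | succ K ih =>
    rw [pProd, Finset.prod_range_succ, ← pProd, ih]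
    have h := eulerF_mul K
    calc eulerF K * Ring.inverse (1 - qq^(K+1)*yy)
        = (eulerF (K+1) * (1 - qq^(K+1)*yy)) * Ring.inverse (1 - qq^(K+1)*yy) := by rw [h]
      _ = eulerF (K+1) * ((1 - qq^(K+1)*yy) * Ring.inverse (1 - qq^(K+1)*yy)) := by ring
      _ = eulerF (K+1) := by
          rw [mul_inverse_cancel (isUnit_one_sub_qq_pow_mul_yy (K+1)), mul_one]

lemma qPoch_tail (s : ℕ) : ∀ k : ℕ, ∃ h : M, qPoch (s + k) = qPoch s * (1 + qq^(s+1) * h) := by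
  intro k
  induction k with
  | zero => exact ⟨0, by simp⟩
  | succ m ih =>
    obtain ⟨h, hh⟩ := ih
    refine ⟨h - qq^m - h * (qq^m * qq^(s+1)), ?_⟩
    rw [show s + (m+1) = (s + m) + 1 from by omega, qPoch_succ, hh,
      show s + m + 1 = (s+1) + m from by omega, pow_add]
    ring

lemma gb_approx (b N m : ℕ) (hm : m < N) :
    (MvPowerSeries.coeff (fs m 0)) (gb (N + b - 1) b)
      = (MvPowerSeries.coeff (fs m 0)) (Ring.inverse (qPoch b)) := by
  rcases Nat.eq_zero_or_pos b with rfl | hb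
  · simp [Ring.inverse_one]
  · have hN : 1 ≤ N := by omega
    have hkey := qPoch_gb (N + b - 1) b (by omega)
    obtain ⟨h, hh⟩ := qPoch_tail (N - 1) b
    rw [show N - 1 + b = N + b - 1 from by omega, show N - 1 + 1 = N from by omega] at hh
    rw [show N + b - 1 - b = N - 1 from by omega] at hkey
    -- gb * qPoch b = 1 + q^N h  (cancel the unit qPoch (N-1))
    have hcancel : gb (N + b - 1) b * qPoch b = 1 + qq^N * h := by
      have hu := isUnit_qPoch (N - 1)
      apply hu.mul_left_cancel
      calc qPoch (N-1) * (gb (N + b - 1) b * qPoch b)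
          = gb (N + b - 1) b * (qPoch b * qPoch (N-1)) := by ring
        _ = qPoch (N + b - 1) := hkey
        _ = qPoch (N-1) * (1 + qq^N * h) := hh
    have hfinal : gb (N + b - 1) b
        = Ring.inverse (qPoch b) + qq^N * (Ring.inverse (qPoch b) * h) := by
      have hub := isUnit_qPoch b
      calc gb (N + b - 1) b
          = (gb (N + b - 1) b * qPoch b) * Ring.inverse (qPoch b) := by
            rw [mul_assoc, Ring.mul_inverse_cancel _ hub, mul_one]
        _ = (1 + qq^N * h) * Ring.inverse (qPoch b) := by rw [hcancel]
        _ = Ring.inverse (qPoch b) + qq^N * (Ring.inverse (qPoch b) * h) := by ring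
    rw [hfinal, map_add, coeff_qq_mul_zero hm, add_zero]

/-- The common limit value, defined coefficientwise. -/
noncomputable def limitF : M :=
  fun d => (MvPowerSeries.coeff d) (qq ^ (d 1) * yy ^ (d 1) * Ring.inverse (qPoch (d 1)))

lemma coeff_limitF (a b : ℕ) :
    (MvPowerSeries.coeff (fs a b)) limitF
      = if b ≤ a then (MvPowerSeries.coeff (fs (a-b) 0)) (Ring.inverse (qPoch b)) else 0 := by
  rw [MvPowerSeries.coeff_apply (R := ℤ) limitF (fs a b)]
  show (MvPowerSeries.coeff (fs a b)) (qq ^ ((fs a b) 1) * yy ^ ((fs a b) 1) * Ring.inverse (qPoch ((fs a b) 1))) = _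
  rw [fs_apply_one, coeff_qy_mul]
  rcases le_or_gt b a with h | h
  · rw [if_pos ⟨h, le_rfl⟩, if_pos h, Nat.sub_self]
  · rw [if_neg (by omega), if_neg (by omega)]

lemma coeff_pProd_stable (a b N : ℕ) (hN : a < N) :
    (MvPowerSeries.coeff (fs a b)) (pProd N) = (MvPowerSeries.coeff (fs a b)) limitF := by
  rw [pProd_eq_eulerF, coeff_eulerF, coeff_limitF, coeff_qq_mul]
  rcases le_or_gt b a with h | h
  · rw [if_pos h, if_pos h]
    exact gb_approx b N (a - b) (by omega)
  · rw [if_neg (by omega), if_neg (by omega)]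

/-! ### the infinite product -/

lemma inverse_one_sub_expand (u : M) (hu : IsUnit (1 - u)) :
    Ring.inverse (1 - u) = 1 + u * Ring.inverse (1 - u) := by
  have h := Ring.inverse_mul_cancel (1 - u) hu
  calc Ring.inverse (1 - u) = Ring.inverse (1-u) * (1 - u) + u * Ring.inverse (1-u) := by ring
    _ = 1 + u * Ring.inverse (1 - u) := by rw [h]

lemma coeff_mul_factor (d : Fin 2 →₀ ℕ) (B : M) (m : ℕ) (hm : d 0 < m + 1) :
    (MvPowerSeries.coeff d) (B * Ring.inverse (1 - qq^(m+1)*yy))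
      = (MvPowerSeries.coeff d) B := by
  have hu := isUnit_one_sub_qq_pow_mul_yy (m+1)
  rw [inverse_one_sub_expand _ hu]
  have expand : B * (1 + qq ^ (m + 1) * yy * Ring.inverse (1 - qq ^ (m + 1) * yy))
      = B + qq^(m+1) * (yy * Ring.inverse (1 - qq ^ (m + 1) * yy) * B) := by ring
  rw [expand, map_add]
  rw [eq_fs d] at hm ⊢
  rw [fs_apply_zero] at hm
  rw [coeff_qq_mul_zero hm, add_zero]

lemma coeff_mul_prod_factors (d : Fin 2 →₀ ℕ) (B : M) (T : Finset ℕ)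
    (hT : ∀ m ∈ T, d 0 < m + 1) :
    (MvPowerSeries.coeff d) (B * ∏ m ∈ T, Ring.inverse (1 - qq^(m+1)*yy))
      = (MvPowerSeries.coeff d) B := by
  induction T using Finset.induction_on with
  | empty => simp
  | @insert m T' hm ih =>
    rw [Finset.prod_insert hm, show B * (Ring.inverse (1 - qq^(m+1)*yy) * ∏ x ∈ T', Ring.inverse (1 - qq^(x+1)*yy)) = (B * ∏ x ∈ T', Ring.inverse (1 - qq^(x+1)*yy)) * Ring.inverse (1 - qq^(m+1)*yy) from by ring,
      coeff_mul_factor d _ m (hT m (Finset.mem_insert_self m T'))]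
    exact ih fun x hx => hT x (Finset.mem_insert_of_mem hx)

lemma hasProd_lhs : HasProd (fun m => Ring.inverse (1 - qq^(m+1)*yy)) limitF := by
  rw [HasProd]
  apply tendsto_pi_nhds.mpr
  intro d
  apply Filter.Tendsto.congr' (f₁ := fun _ => limitF d)
  · rw [Filter.EventuallyEq, SummationFilter.unconditional_filter, Filter.eventually_atTop]
    refine ⟨Finset.range (d 0 + 1), fun s hs => ?_⟩
    have hsplit : s = Finset.range (d 0 + 1) ∪ (s \ Finset.range (d 0 + 1)) := by
      rw [Finset.union_sdiff_of_subset hs]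
    have : (∏ m ∈ s, Ring.inverse (1 - qq^(m+1)*yy))
        = (∏ m ∈ Finset.range (d 0 + 1), Ring.inverse (1 - qq^(m+1)*yy))
          * ∏ m ∈ s \ Finset.range (d 0 + 1), Ring.inverse (1 - qq^(m+1)*yy) := by
      rw [← Finset.prod_union (Finset.disjoint_sdiff)]
      rw [← hsplit]
    have hcoeff : (MvPowerSeries.coeff d) (∏ m ∈ s, Ring.inverse (1 - qq^(m+1)*yy))
        = (MvPowerSeries.coeff d) (pProd (d 0 + 1)) := by
      rw [this, ← pProd]
      apply coeff_mul_prod_factors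
      intro m hm
      rw [Finset.mem_sdiff, Finset.mem_range] at hm
      omega
    have hstable : (MvPowerSeries.coeff d) (pProd (d 0 + 1)) = (MvPowerSeries.coeff d) limitF := by
      have h := coeff_pProd_stable (d 0) (d 1) (d 0 + 1) (by omega)
      rw [← eq_fs d] at h
      exact h
    show limitF d = (∏ m ∈ s, Ring.inverse (1 - qq ^ (m + 1) * yy)) d
    rw [← MvPowerSeries.coeff_apply (R := ℤ) (∏ m ∈ s, Ring.inverse (1 - qq ^ (m + 1) * yy)) d,
      ← MvPowerSeries.coeff_apply (R := ℤ) limitF d, hcoeff, hstable]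
  · exact tendsto_const_nhds

lemma tprod_lhs : (∏' m : ℕ, Ring.inverse (1 - qq ^ (m + 1) * yy)) = limitF := by
  haveI : T2Space M := inferInstanceAs (T2Space ((Fin 2 →₀ ℕ) → ℤ))
  exact hasProd_lhs.tprod_eq

/-! ### DualCharge combinatorics -/

open scoped Classical

def csum (c : DualCharge) : ℕ := ∑ s : Fin c.1, c.2.1 s
def qsum (c : DualCharge) : ℕ := ∑ s : Fin c.1, (c.2.1 s) ^ 2
noncomputable def wden (c : DualCharge) : M :=
  ∏ s : Fin c.1, qPoch (c.2.1 s - if h : (s : ℕ) + 1 < c.1 then c.2.1 ⟨(s : ℕ) + 1, h⟩ else 0)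
def dhead (c : DualCharge) : ℕ := if h : 0 < c.1 then c.2.1 ⟨0, h⟩ else 0
noncomputable def w (c : DualCharge) : M := qq ^ qsum c * Ring.inverse (wden c)

def emptyDC : DualCharge := ⟨0, fun i => i.elim0, fun i => i.elim0, fun i => i.elim0⟩

lemma DualCharge.ext : ∀ {c d : DualCharge} (_ : c.1 = d.1),
    (∀ (i : ℕ) (hc : i < c.1) (hd : i < d.1), c.2.1 ⟨i, hc⟩ = d.2.1 ⟨i, hd⟩) → c = d := by
  rintro ⟨u, f, hf⟩ ⟨v, g, hg⟩ h1 h2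
  dsimp at h1
  subst h1
  have : f = g := by
    funext i
    exact h2 i.1 i.2 i.2
  subst this
  rfl

lemma isUnit_wden (c : DualCharge) : IsUnit (wden c) := by
  rw [wden]
  induction (Finset.univ : Finset (Fin c.1)) using Finset.induction_on with
  | empty => simp
  | @insert s T hs ih =>
    rw [Finset.prod_insert hs]
    exact (isUnit_qPoch _).mul ih

lemma Qonly.prodq {ι : Type*} (s : Finset ι) (f : ι → M) (h : ∀ i ∈ s, Qonly (f i)) :
    Qonly (∏ i ∈ s, f i) := by
  induction s using Finset.induction_on with
  | empty => simpa using Qonly.one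
  | @insert a T ha ih =>
    rw [Finset.prod_insert ha]
    exact (h a (Finset.mem_insert_self a T)).mul (ih fun i hi => h i (Finset.mem_insert_of_mem hi))

lemma Qonly.wden (c : DualCharge) : Qonly (wden c) :=
  Qonly.prodq _ _ fun i _ => Qonly.qPoch _

lemma entry_le_csum (c : DualCharge) (s : Fin c.1) : c.2.1 s ≤ csum c :=
  Finset.single_le_sum (fun i _ => Nat.zero_le _) (Finset.mem_univ s)

lemma len_le_csum (c : DualCharge) : c.1 ≤ csum c := by
  have : ∑ _s : Fin c.1, 1 ≤ csum c :=
    Finset.sum_le_sum fun i _ => c.2.2.1 i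
  simpa using this

lemma dhead_le_csum (c : DualCharge) : dhead c ≤ csum c := by
  rw [dhead]
  split
  · exact entry_le_csum c _
  · exact Nat.zero_le _

lemma dhead_pos (c : DualCharge) (h : 0 < c.1) : 0 < dhead c := by
  rw [dhead, dif_pos h]
  exact c.2.2.1 _

lemma len_eq_zero (c : DualCharge) (h : c.1 = 0) : c = emptyDC := by
  apply DualCharge.ext
  · exact h
  · intro i hc _
    omega

@[simp] lemma csum_empty : csum emptyDC = 0 := rfl
@[simp] lemma qsum_empty : qsum emptyDC = 0 := rfl
@[simp] lemma dhead_empty : dhead emptyDC = 0 := rfl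
@[simp] lemma wden_empty : wden emptyDC = 1 := rfl
@[simp] lemma w_empty : w emptyDC = 1 := by
  rw [w, qsum_empty, wden_empty, pow_zero, one_mul, Ring.inverse_one]

lemma csum_eq_zero_iff (c : DualCharge) : csum c = 0 ↔ c.1 = 0 := by
  constructor
  · intro h
    by_contra hne
    have := dhead_pos c (by omega)
    have := dhead_le_csum c
    omega
  · intro h
    rw [len_eq_zero c h]; rfl

lemma finite_csum_le (B : ℕ) : {c : DualCharge | csum c ≤ B}.Finite := by
  rw [← Set.finite_coe_iff]
  let F : {c : DualCharge // csum c ≤ B} → Fin (B+1) × (Fin (B+1) → Fin (B+1)) := fun x =>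
    (⟨x.1.1, by have := len_le_csum x.1; have := x.2; omega⟩,
     fun i => if h : (i : ℕ) < x.1.1 then
        ⟨x.1.2.1 ⟨i, h⟩, by have := entry_le_csum x.1 ⟨i, h⟩; have := x.2; omega⟩ else 0)
  apply Finite.of_injective F
  intro x y hxy
  have h1 : x.1.1 = y.1.1 := by
    have := congrArg Prod.fst hxy
    simpa [F] using congrArg Fin.val this
  apply Subtype.ext
  apply DualCharge.ext h1
  intro i hc hd
  have hi : i < B + 1 := by have := len_le_csum x.1; have := x.2; omega
  have := congrFun (congrArg Prod.snd hxy) ⟨i, hi⟩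
  simp only [F] at this
  rw [dif_pos (show ((⟨i, hi⟩ : Fin (B+1)) : ℕ) < x.1.1 from hc),
    dif_pos (show ((⟨i, hi⟩ : Fin (B+1)) : ℕ) < y.1.1 from hd)] at this
  exact congrArg Fin.val this

noncomputable def Cset (b : ℕ) : Finset DualCharge :=
  (finite_csum_le b).toFinset.filter (fun c => csum c = b)

lemma mem_Cset {b : ℕ} {c : DualCharge} : c ∈ Cset b ↔ csum c = b := by
  rw [Cset, Finset.mem_filter, Set.Finite.mem_toFinset]
  constructor
  · exact fun h => h.2
  · intro h; exact ⟨by simp [Set.mem_setOf_eq]; omega, h⟩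

noncomputable def R (b k : ℕ) : M := ∑ c ∈ (Cset b).filter (fun c => dhead c = k), w c

def tailDC (c : DualCharge) : DualCharge :=
  ⟨c.1 - 1, fun i => c.2.1 ⟨i.1 + 1, by have := i.isLt; omega⟩,
   fun i => c.2.2.1 _,
   fun i j hij => c.2.2.2 ⟨i.1 + 1, by have := i.isLt; omega⟩ ⟨j.1 + 1, by have := j.isLt; omega⟩
     (by simp only [Fin.mk_le_mk]; have := (Fin.le_def).mp hij; omega)⟩

lemma tail_len (c : DualCharge) : (tailDC c).1 = c.1 - 1 := rfl

lemma tail_val (c : DualCharge) (i : ℕ) (hi : i < (tailDC c).1) (hi' : i + 1 < c.1) :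
    (tailDC c).2.1 ⟨i, hi⟩ = c.2.1 ⟨i+1, hi'⟩ := rfl

def consDC (k : ℕ) (c : DualCharge) : DualCharge :=
  ⟨c.1 + 1, fun i => Fin.cases (max k (max (dhead c) 1)) (fun j => c.2.1 j) i,
    by
      intro i
      rcases Fin.eq_zero_or_eq_succ i with rfl | ⟨j, rfl⟩
      · simp only [Fin.cases_zero]
        have : (1:ℕ) ≤ max k (max (dhead c) 1) := le_max_of_le_right (le_max_right _ _)
        omega
      · simp only [Fin.cases_succ]
        exact c.2.2.1 j,
    by
      intro i j hij
      rcases Fin.eq_zero_or_eq_succ i with rfl | ⟨i', rfl⟩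
      · rcases Fin.eq_zero_or_eq_succ j with rfl | ⟨j', rfl⟩
        · exact le_rfl
        · simp only [Fin.cases_zero, Fin.cases_succ]
          have h0 : c.2.1 j' ≤ dhead c := by
            rw [dhead, dif_pos (by have := j'.isLt; omega : 0 < c.1)]
            exact c.2.2.2 ⟨0, by have := j'.isLt; omega⟩ j' (by simp [Fin.le_def])
          exact le_trans (le_trans h0 (le_max_left _ _)) (le_max_of_le_right le_rfl)
      · rcases Fin.eq_zero_or_eq_succ j with rfl | ⟨j', rfl⟩
        · exfalso
          have := Fin.le_zero_iff.mp hij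
          exact Fin.succ_ne_zero i' this
        · simp only [Fin.cases_succ]
          exact c.2.2.2 i' j' (Fin.succ_le_succ_iff.mp hij)⟩

lemma cons_len (k : ℕ) (c : DualCharge) : (consDC k c).1 = c.1 + 1 := rfl

lemma cons_val_zero (k : ℕ) (c : DualCharge) (hk : 1 ≤ k) (hh : dhead c ≤ k) (h0 : 0 < (consDC k c).1) :
    (consDC k c).2.1 ⟨0, h0⟩ = k := by
  have h : (consDC k c).2.1 ⟨0, h0⟩ = max k (max (dhead c) 1) := rfl
  rw [h]
  omega

lemma cons_val_succ (k : ℕ) (c : DualCharge) (i : ℕ) (hi : i < c.1) (hi' : i + 1 < (consDC k c).1) :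
    (consDC k c).2.1 ⟨i+1, hi'⟩ = c.2.1 ⟨i, hi⟩ := rfl
lemma dhead_cons (k : ℕ) (c : DualCharge) (hk : 1 ≤ k) (hh : dhead c ≤ k) :
    dhead (consDC k c) = k := by
  rw [dhead, dif_pos (by rw [cons_len]; omega)]
  exact cons_val_zero k c hk hh _

lemma tail_cons (k : ℕ) (c : DualCharge) (hk : 1 ≤ k) (hh : dhead c ≤ k) :
    tailDC (consDC k c) = c := by
  apply DualCharge.ext
  · rw [tail_len, cons_len]; omega
  · intro i hc hd
    rw [tail_val _ i hc (by rw [cons_len]; rw [tail_len, cons_len] at hc; omega),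
      cons_val_succ k c i hd]

lemma dhead_tail_le (c : DualCharge) : dhead (tailDC c) ≤ dhead c := by
  rcases Nat.eq_zero_or_pos (tailDC c).1 with h | h
  · rw [dhead, dif_neg (by omega)]
    exact Nat.zero_le _
  · rw [tail_len] at h
    rw [dhead, dhead, dif_pos (by rw [tail_len]; omega), dif_pos (by omega : 0 < c.1)]
    rw [tail_val c 0 (by rw [tail_len]; omega) (by omega)]
    exact c.2.2.2 ⟨0, by omega⟩ ⟨1, by omega⟩ (by simp [Fin.le_def])

lemma cons_dhead_tail (c : DualCharge) (h : 0 < c.1) : consDC (dhead c) (tailDC c) = c := by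
  apply DualCharge.ext
  · rw [cons_len, tail_len]; omega
  · intro i hc hd
    cases i with
    | zero =>
      rw [cons_val_zero _ _ (dhead_pos c h) (dhead_tail_le c)]
      rw [dhead, dif_pos h]
    | succ m =>
      rw [cons_val_succ _ _ m (by rw [cons_len, tail_len] at hc; rw [tail_len]; omega)]
      rw [tail_val c m _ hd]

lemma csum_cons (k : ℕ) (c : DualCharge) (hk : 1 ≤ k) (hh : dhead c ≤ k) :
    csum (consDC k c) = k + csum c := by
  have hz : (consDC k c).2.1 (0 : Fin (c.1+1)) = k := cons_val_zero k c hk hh (Nat.succ_pos _)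
  have hsucc : ∀ i : Fin c.1, (consDC k c).2.1 i.succ = c.2.1 i :=
    fun i => cons_val_succ k c i.1 i.2 (by have := i.isLt; simp only [cons_len]; omega)
  show (∑ s : Fin (c.1 + 1), (consDC k c).2.1 s) = k + csum c
  rw [show k + csum c = (consDC k c).2.1 (0 : Fin (c.1+1)) + ∑ i : Fin c.1, (consDC k c).2.1 i.succ from by
    rw [hz]; exact congrArg (k + ·) (Finset.sum_congr rfl fun i _ => (hsucc i).symm)]
  exact Fin.sum_univ_succ _

lemma qsum_cons (k : ℕ) (c : DualCharge) (hk : 1 ≤ k) (hh : dhead c ≤ k) :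
    qsum (consDC k c) = k^2 + qsum c := by
  have hz : (consDC k c).2.1 (0 : Fin (c.1+1)) = k := cons_val_zero k c hk hh (Nat.succ_pos _)
  have hsucc : ∀ i : Fin c.1, (consDC k c).2.1 i.succ = c.2.1 i :=
    fun i => cons_val_succ k c i.1 i.2 (by have := i.isLt; simp only [cons_len]; omega)
  show (∑ s : Fin (c.1 + 1), ((consDC k c).2.1 s)^2) = k^2 + qsum c
  rw [Fin.sum_univ_succ, hz]
  exact congrArg (k^2 + ·) (Finset.sum_congr rfl fun i _ => by rw [hsucc i])

lemma wden_cons (k : ℕ) (c : DualCharge) (hk : 1 ≤ k) (hh : dhead c ≤ k) :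
    wden (consDC k c) = qPoch (k - dhead c) * wden c := by
  have hz : (consDC k c).2.1 (0 : Fin (c.1+1)) = k := cons_val_zero k c hk hh (Nat.succ_pos _)
  show (∏ s : Fin (c.1 + 1), qPoch ((consDC k c).2.1 s -
      if h : (s : ℕ) + 1 < c.1 + 1 then (consDC k c).2.1 ⟨(s : ℕ) + 1, h⟩ else 0)) = _
  rw [Fin.prod_univ_succ]
  congr 1
  · -- first factor
    rw [hz]
    rcases Nat.eq_zero_or_pos c.1 with hc | hc
    · rw [dif_neg (by rw [Fin.val_zero]; omega)]
      rw [dhead, dif_neg (by omega)]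
    · rw [dif_pos (show ((0 : Fin (c.1+1)) : ℕ) + 1 < c.1 + 1 by
        first | omega | (simp only [cons_len, Fin.val_zero]; omega))]
      have hv : (consDC k c).2.1 ⟨((0 : Fin (c.1+1)) : ℕ) + 1, by
          first | omega | (simp only [cons_len, Fin.val_zero]; omega)⟩
          = c.2.1 ⟨0, hc⟩ := cons_val_succ k c 0 hc (by
            first | omega | (simp only [cons_len, Fin.val_zero]; omega))
      rw [hv, dhead, dif_pos hc]
  · apply Finset.prod_congr rfl
    intro i _
    have hval : (consDC k c).2.1 i.succ = c.2.1 i :=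
      cons_val_succ k c i.1 i.2 (by have := i.isLt; simp only [cons_len]; omega)
    rw [hval]
    by_cases hcond : (i : ℕ) + 1 < c.1
    · rw [dif_pos (show ((i.succ : Fin (c.1+1)) : ℕ) + 1 < c.1 + 1 by
        rw [Fin.val_succ]; omega), dif_pos hcond]
      rfl
    · rw [dif_neg (by rw [Fin.val_succ]; omega), dif_neg hcond]

lemma csum_tail (c : DualCharge) (h : 0 < c.1) : csum c = dhead c + csum (tailDC c) := by
  conv_lhs => rw [← cons_dhead_tail c h]
  rw [csum_cons _ _ (dhead_pos c h) (dhead_tail_le c)]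

lemma qsum_tail (c : DualCharge) (h : 0 < c.1) : qsum c = (dhead c)^2 + qsum (tailDC c) := by
  conv_lhs => rw [← cons_dhead_tail c h]
  rw [qsum_cons _ _ (dhead_pos c h) (dhead_tail_le c)]

lemma wden_tail (c : DualCharge) (h : 0 < c.1) :
    wden c = qPoch (dhead c - dhead (tailDC c)) * wden (tailDC c) := by
  conv_lhs => rw [← cons_dhead_tail c h]
  rw [wden_cons _ _ (dhead_pos c h) (dhead_tail_le c)]

lemma Cset_zero : Cset 0 = {emptyDC} := by
  ext c
  rw [mem_Cset, Finset.mem_singleton]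
  constructor
  · intro h; exact len_eq_zero c ((csum_eq_zero_iff c).mp h)
  · rintro rfl; rfl

lemma R_zero_zero : R 0 0 = 1 := by
  rw [R, Cset_zero, Finset.filter_singleton, if_pos dhead_empty, Finset.sum_singleton, w_empty]

lemma R_eq_zero_of_gt (b k : ℕ) (h : b < k) : R b k = 0 := by
  apply Finset.sum_eq_zero
  intro c hc
  exfalso
  rw [Finset.mem_filter, mem_Cset] at hc
  have := dhead_le_csum c
  omega

lemma R_pos_zero (b : ℕ) (hb : 1 ≤ b) : R b 0 = 0 := by
  apply Finset.sum_eq_zero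
  intro c hc
  exfalso
  rw [Finset.mem_filter, mem_Cset] at hc
  have h1 : c.1 ≠ 0 := by
    intro h
    rw [(csum_eq_zero_iff c).mpr h] at hc
    omega
  have := dhead_pos c (by omega)
  omega

lemma dhead_pos_len {c : DualCharge} {k : ℕ} (hk : 1 ≤ k) (h : dhead c = k) : 0 < c.1 := by
  by_contra hc
  rw [dhead, dif_neg hc] at h
  omega

lemma inv_poch_mul (k j : ℕ) (hj : j ≤ k) :
    Ring.inverse (qPoch (k - j)) * Ring.inverse (qPoch j) = gb k j * Ring.inverse (qPoch k) := by
  have hu : IsUnit (qPoch j * qPoch (k - j)) := (isUnit_qPoch j).mul (isUnit_qPoch (k - j))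
  apply hu.mul_left_cancel
  have h1 : qPoch j * qPoch (k - j) * (Ring.inverse (qPoch (k - j)) * Ring.inverse (qPoch j))
      = (qPoch j * Ring.inverse (qPoch j)) * (qPoch (k - j) * Ring.inverse (qPoch (k - j))) := by
    ring
  have h2 : qPoch j * qPoch (k - j) * (gb k j * Ring.inverse (qPoch k))
      = (gb k j * (qPoch j * qPoch (k - j))) * Ring.inverse (qPoch k) := by ring
  rw [h1, h2, mul_inverse_cancel (isUnit_qPoch j), mul_inverse_cancel (isUnit_qPoch (k-j)),
    qPoch_gb k j hj, mul_inverse_cancel (isUnit_qPoch k), one_mul]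

lemma R_rec (b k : ℕ) (hk : 1 ≤ k) (hkb : k ≤ b) :
    R b k = qq^(k^2) * ∑ j ∈ Finset.range (k+1), Ring.inverse (qPoch (k - j)) * R (b-k) j := by
  have step1 : ∀ j, Ring.inverse (qPoch (k-j)) * R (b-k) j
      = ∑ c ∈ (Cset (b-k)).filter (fun c => dhead c = j),
          Ring.inverse (qPoch (k - dhead c)) * w c := by
    intro j
    rw [R, Finset.mul_sum]
    apply Finset.sum_congr rfl
    intro c hc
    rw [Finset.mem_filter] at hc
    rw [hc.2]
  have step2 : ∀ j ∈ Finset.range (k+1), (Cset (b-k)).filter (fun c => dhead c = j)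
      = ((Cset (b-k)).filter (fun c => dhead c ≤ k)).filter (fun c => dhead c = j) := by
    intro j hj
    rw [Finset.mem_range] at hj
    rw [Finset.filter_filter]
    apply Finset.filter_congr
    intro c _
    constructor
    · intro h; exact ⟨by omega, h⟩
    · intro h; exact h.2
  have step3 : ∑ j ∈ Finset.range (k+1),
        ∑ c ∈ ((Cset (b-k)).filter (fun c => dhead c ≤ k)).filter (fun c => dhead c = j),
          (Ring.inverse (qPoch (k - dhead c)) * w c)
      = ∑ c ∈ (Cset (b-k)).filter (fun c => dhead c ≤ k),
          Ring.inverse (qPoch (k - dhead c)) * w c :=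
    Finset.sum_fiberwise_of_maps_to
      (fun c hc => Finset.mem_range.mpr (by
        rw [Finset.mem_filter] at hc; omega)) _
  rw [Finset.sum_congr rfl (fun j hj => by rw [step1 j, step2 j hj]), step3, Finset.mul_sum]
  rw [R]
  apply Finset.sum_nbij' (i := tailDC) (j := consDC k)
  · intro c hc
    rw [Finset.mem_filter, mem_Cset] at hc
    obtain ⟨hcs, hh⟩ := hc
    have hlen : 0 < c.1 := dhead_pos_len hk hh
    rw [Finset.mem_filter, mem_Cset]
    constructor
    · have := csum_tail c hlen
      omega
    · have := dhead_tail_le c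
      omega
  · intro c' hc'
    rw [Finset.mem_filter, mem_Cset] at hc'
    rw [Finset.mem_filter, mem_Cset]
    constructor
    · rw [csum_cons k c' hk hc'.2]
      omega
    · exact dhead_cons k c' hk hc'.2
  · intro c hc
    rw [Finset.mem_filter, mem_Cset] at hc
    have hlen : 0 < c.1 := dhead_pos_len hk hc.2
    rw [← hc.2]
    exact cons_dhead_tail c hlen
  · intro c' hc'
    rw [Finset.mem_filter, mem_Cset] at hc'
    exact tail_cons k c' hk hc'.2
  · intro c hc
    rw [Finset.mem_filter, mem_Cset] at hc
    have hlen : 0 < c.1 := dhead_pos_len hk hc.2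
    rw [w, qsum_tail c hlen, wden_tail c hlen, hc.2,
      inverse_mul_inverse (isUnit_qPoch _) (isUnit_wden _), pow_add, w]
    ring

lemma R_closed : ∀ b k : ℕ, 1 ≤ k → k ≤ b →
    R b k = qq^(k^2 + (b - k)) * gb (b-1) (b-k) * Ring.inverse (qPoch k) := by
  intro b
  induction b using Nat.strong_induction_on with
  | _ b IH =>
    intro k hk hkb
    rw [R_rec b k hk hkb]
    rcases eq_or_lt_of_le hkb with rfl | hlt
    · -- b = k
      have hsum : ∑ j ∈ Finset.range (k+1), Ring.inverse (qPoch (k - j)) * R (k-k) j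
          = Ring.inverse (qPoch k) := by
        rw [show k - k = 0 from by omega]
        rw [Finset.sum_eq_single 0]
        · rw [R_zero_zero, mul_one, Nat.sub_zero]
        · intro j _ hne
          rw [R_eq_zero_of_gt 0 j (by omega), mul_zero]
        · intro h; exact absurd (Finset.mem_range.mpr (by omega)) h
      rw [hsum, Nat.sub_self, add_zero, gb_zero_right, mul_one]
    · have hm : 1 ≤ b - k := by omega
      set m := b - k with hmdef
      rw [Finset.sum_range_succ']
      rw [R_pos_zero m (by omega), mul_zero, add_zero]
      have hterm : ∀ i, i < k → Ring.inverse (qPoch (k-(i+1))) * R m (i+1)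
          = qq^m * (qq^(i*(i+1)) * gb (m-1) i * gb k (i+1)) * Ring.inverse (qPoch k) := by
        intro i hik
        by_cases him : i + 1 ≤ m
        · rw [IH m (by omega) (i+1) (by omega) him]
          have hsymm : gb (m-1) (m-(i+1)) = gb (m-1) i := by
            rw [show m - (i+1) = (m-1) - i from by omega]
            exact gb_symm (m-1) i (by omega)
          rw [hsymm]
          have hexp : (i+1)^2 + (m - (i+1)) = m + i*(i+1) := by
            zify [him]
            ring
          rw [hexp]
          have hipm := inv_poch_mul k (i+1) (by omega)
          calc Ring.inverse (qPoch (k-(i+1)))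
                * (qq ^ (m + i*(i+1)) * gb (m-1) i * Ring.inverse (qPoch (i+1)))
              = qq ^ (m + i*(i+1)) * gb (m-1) i
                * (Ring.inverse (qPoch (k-(i+1))) * Ring.inverse (qPoch (i+1))) := by ring
            _ = qq ^ (m + i*(i+1)) * gb (m-1) i * (gb k (i+1) * Ring.inverse (qPoch k)) := by
                rw [hipm]
            _ = qq^m * (qq^(i*(i+1)) * gb (m-1) i * gb k (i+1)) * Ring.inverse (qPoch k) := by
                rw [pow_add]; ring
        · rw [R_eq_zero_of_gt m (i+1) (by omega), mul_zero,
            gb_eq_zero (show m - 1 < i from by omega)]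
          ring
      rw [Finset.sum_congr rfl (fun i hi => hterm i (Finset.mem_range.mp hi))]
      have hzero_high : ∀ i ∈ Finset.range (k+m), i ∉ Finset.range k →
          qq^m * (qq^(i*(i+1)) * gb (m-1) i * gb k (i+1)) * Ring.inverse (qPoch k) = 0 := by
        intro i _ hik
        rw [Finset.mem_range] at hik
        rw [gb_eq_zero (show k < i + 1 from by omega)]
        ring
      rw [Finset.sum_subset (Finset.range_subset_range.mpr (by omega : k ≤ k + m)) hzero_high]
      have hzero_high2 : ∀ i ∈ Finset.range (k+m), i ∉ Finset.range m →
          qq^m * (qq^(i*(i+1)) * gb (m-1) i * gb k (i+1)) * Ring.inverse (qPoch k) = 0 := by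
        intro i _ him
        rw [Finset.mem_range] at him
        rw [gb_eq_zero (show m - 1 < i from by omega)]
        ring
      rw [← Finset.sum_subset (Finset.range_subset_range.mpr (by omega : m ≤ k + m)) hzero_high2]
      have hfactor : ∑ i ∈ Finset.range m,
            qq^m * (qq^(i*(i+1)) * gb (m-1) i * gb k (i+1)) * Ring.inverse (qPoch k)
          = qq^m * (∑ i ∈ Finset.range m, qq^(i*(i+1)) * gb (m-1) i * gb k (i+1))
            * Ring.inverse (qPoch k) := by
        rw [Finset.mul_sum, Finset.sum_mul]
      rw [hfactor]
      have hdiamond : ∑ i ∈ Finset.range m, qq^(i*(i+1)) * gb (m-1) i * gb k (i+1)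
          = gb (b-1) (b-k) := by
        have := diamond m k 0 hm
        simp only [add_zero] at this
        rw [this, hmdef]
        have h1 : k + (b - k) - 1 = b - 1 := by omega
        rw [h1]
      rw [hdiamond, pow_add]
      ring

lemma sum_Cset (b : ℕ) : ∑ c ∈ Cset b, w c = qq^b * Ring.inverse (qPoch b) := by
  rcases Nat.eq_zero_or_pos b with rfl | hb
  · rw [Cset_zero, Finset.sum_singleton, w_empty, pow_zero, qPoch_zero, Ring.inverse_one, mul_one]
  · have hfib : ∑ k ∈ Finset.range (b+1), ∑ c ∈ (Cset b).filter (fun c => dhead c = k), w c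
        = ∑ c ∈ Cset b, w c :=
      Finset.sum_fiberwise_of_maps_to (fun c hc => Finset.mem_range.mpr (by
        rw [mem_Cset] at hc; have := dhead_le_csum c; omega)) _
    rw [← hfib]
    show ∑ k ∈ Finset.range (b+1), R b k = _
    rw [Finset.sum_range_succ']
    rw [R_pos_zero b hb, add_zero]
    have hterm : ∀ i, i < b → R b (i+1)
        = qq^b * (qq^(i*(i+1)) * gb (b-1) i * Ring.inverse (qPoch (i+1))) := by
      intro i hib
      rw [R_closed b (i+1) (by omega) (by omega)]
      have hsymm : gb (b-1) (b-(i+1)) = gb (b-1) i := by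
        rw [show b - (i+1) = (b-1) - i from by omega]
        exact gb_symm (b-1) i (by omega)
      rw [hsymm]
      have hexp : (i+1)^2 + (b - (i+1)) = b + i*(i+1) := by
        zify [show i+1 ≤ b from hib]; ring
      rw [hexp, pow_add]
      ring
    rw [Finset.sum_congr rfl (fun i hi => hterm i (Finset.mem_range.mp hi))]
    have hclubs := clubs b 0 hb
    simp only [add_zero] at hclubs
    rw [← Finset.mul_sum, hclubs]

/-! ### the infinite sum -/

noncomputable def g (c : DualCharge) : M := qq ^ qsum c * yy ^ csum c * Ring.inverse (wden c)

lemma coeff_g_zero {a b : ℕ} {c : DualCharge} (h : csum c ≠ b ∨ a < qsum c) :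
    (MvPowerSeries.coeff (fs a b)) (g c) = 0 := by
  rw [g, coeff_qy_mul]
  by_cases h1 : qsum c ≤ a ∧ csum c ≤ b
  · rw [if_pos h1]
    rcases h with h | h
    · exact (Qonly.wden c).inverse (isUnit_wden c) _ (by
        rw [fs_apply_one]; omega)
    · omega
  · rw [if_neg h1]

lemma hasSum_rhs : HasSum g limitF := by
  rw [HasSum]
  apply tendsto_pi_nhds.mpr
  intro d
  apply Filter.Tendsto.congr' (f₁ := fun _ => limitF d)
  · rw [Filter.EventuallyEq, SummationFilter.unconditional_filter, Filter.eventually_atTop]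
    refine ⟨(finite_csum_le (d 1)).toFinset, fun S hS => ?_⟩
    have hsum : (MvPowerSeries.coeff d) (∑ c ∈ S, g c) = (MvPowerSeries.coeff d) limitF := by
      rw [map_sum]
      rw [← Finset.sum_subset hS (fun c _ hc => ?_)]
      · -- restrict further to Cset (d 1)
        rw [← Finset.sum_subset (show Cset (d 1) ⊆ (finite_csum_le (d 1)).toFinset from ?_)
          (fun c hc hcn => ?_)]
        · -- main evaluation
          rw [← map_sum]
          have hsplit : ∑ c ∈ Cset (d 1), g c
              = yy ^ (d 1) * (qq ^ (d 1) * Ring.inverse (qPoch (d 1))) := by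
            rw [← sum_Cset (d 1), Finset.mul_sum]
            apply Finset.sum_congr rfl
            intro c hc
            rw [mem_Cset] at hc
            rw [g, w, hc]
            ring
          rw [hsplit]
          show (MvPowerSeries.coeff d) (yy ^ (d 1) * (qq ^ (d 1) * Ring.inverse (qPoch (d 1))))
              = (MvPowerSeries.coeff d) (qq ^ (d 1) * yy ^ (d 1) * Ring.inverse (qPoch (d 1)))
          congr 1
          ring
        · intro c hc
          rw [Set.Finite.mem_toFinset, Set.mem_setOf_eq]
          rw [mem_Cset] at hc
          omega
        · rw [Set.Finite.mem_toFinset, Set.mem_setOf_eq] at hc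
          rw [mem_Cset] at hcn
          rw [eq_fs d]
          exact coeff_g_zero (Or.inl hcn)
      · rw [Set.Finite.mem_toFinset, Set.mem_setOf_eq] at hc
        rw [eq_fs d]
        exact coeff_g_zero (Or.inl (by omega))
    show limitF d = (∑ c ∈ S, g c) d
    rw [← MvPowerSeries.coeff_apply (R := ℤ) (∑ c ∈ S, g c) d,
      ← MvPowerSeries.coeff_apply (R := ℤ) limitF d, hsum]
  · exact tendsto_const_nhds

lemma tsum_rhs : (∑' c : DualCharge, g c) = limitF := by
  haveI : T2Space M := inferInstanceAs (T2Space ((Fin 2 →₀ ℕ) → ℤ))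
  exact hasSum_rhs.tsum_eq

/-- The single-color quasi-particle character identity in `ℤ[[q,y]]`:
`Π_{m≥1} 1/(1-q^m y) = Σ_{u≥0} Σ_{r^(1) ≥ … ≥ r^(u) ≥ 1}
  q^{(r^(1))²+⋯+(r^(u))²} y^{r^(1)+⋯+r^(u)} /
  ((q)_{r^(1)-r^(2)} ⋯ (q)_{r^(u-1)-r^(u)} (q)_{r^(u)})`,
the empty sequence (`u = 0`) contributing `1`. -/
theorem statement7 :
    (∏' m : ℕ, Ring.inverse (1 - qq ^ (m + 1) * yy)) =
      ∑' c : DualCharge,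
        qq ^ (∑ s : Fin c.1, (c.2.1 s) ^ 2) * yy ^ (∑ s : Fin c.1, c.2.1 s) *
          Ring.inverse (∏ s : Fin c.1,
            qPoch (c.2.1 s - if h : (s : ℕ) + 1 < c.1 then c.2.1 ⟨(s : ℕ) + 1, h⟩ else 0)) := by
  rw [tprod_lhs]
  exact tsum_rhs.symm
end

section
/- Fix a positive integer n, an integer M, and an integer j, and let A be the set of 2n products { x(j+i)·y(M-j-i) : 0 ≤ i ≤ 2n-1 } inside the free ℤ-module with basis { x(m)·y(m') : m + m' = M }. Consider the formal recursion coming from expanding (z₁ - z₂)^{2n} Σ_{m+m'=M} x(m) y(m') z₁^{-m-1} z₂^{-m'-1} = 0: then each element of A can be written as a ℤ-linear combination of the basis elements { x(m)·y(m') : m + m' = M } \ A. Concretely: the (2n+1) × (2n) matrix with rows indexed by i ∈ {0,...,2n} and columns by the elements of A, whose entries are the binomial coefficients (-1)^i C(2n, i) appearing as coefficients of elements of A in the relations Σ_{i=0}^{2n} (-1)^i C(2n,i) x(j' + i) y(M - j' - i) = 0 for 2n consecutive values of j', has the property that the square submatrix of coefficients of the A-columns is invertible over ℚ. -/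
/-!
The matrix is the Hankel matrix `(c_{i+s})` of the coefficients of `(X - 1)^{2n}`. A vector `v`
in its left kernel gives a polynomial `U = Σ_s v_s X^{2n-1-s}` of degree `< 2n` such that
`U (X - 1)^{2n}` has no coefficients in degrees `2n-1, …, 4n-2`, i.e. equals `L + c X^{4n-1}`
with `deg L < 2n - 1`. Differentiating `2n - 1` times kills `L` and leaves a multiple of `X - 1`,
which forces `c = 0`; then `L` is a multiple of `(X - 1)^{2n}` of smaller degree, so `L = 0`,
hence `U = 0` and `v = 0`.
-/

open Polynomial

/-- The coefficient of the product `x(m)·y(M-m)` in the relation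
`Σ_{i=0}^{2n} (-1)^i C(2n,i) x(j'+i) y(M-j'-i) = 0` (coming from expanding
`(z₁-z₂)^{2n} x(z₁) y(z₂) = 0`), namely `(-1)^{m-j'} C(2n, m-j')` when
`0 ≤ m - j' ≤ 2n` and `0` otherwise. -/
noncomputable def relCoeff (n : ℕ) (j' m : ℤ) : ℚ :=
  if 0 ≤ m - j' ∧ m - j' ≤ 2 * n then
    (-1) ^ (m - j').toNat * (Nat.choose (2 * n) (m - j').toNat : ℚ)
  else 0

namespace Polynomial

variable {R : Type*} [CommRing R]

theorem coeff_sum_C_mul_X_pow_sub {K : ℕ} (v : Fin (K + 1) → R) (t : Fin (K + 1)) :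
    (∑ s, C (v s) * X ^ (K - s)).coeff (K - t) = v t := by
  simp only [finsetSum_coeff, coeff_C_mul_X_pow]
  rw [Finset.sum_eq_single t (fun s _ hst => if_neg fun h => hst (by omega)) (by simp), if_pos rfl]

theorem coeff_sum_C_mul_X_pow_sub_mul {K : ℕ} (v : Fin (K + 1) → R) (P : R[X]) (i : Fin (K + 1)) :
    ((∑ s, C (v s) * X ^ (K - s)) * P).coeff (K + i) = ∑ s, v s * P.coeff (i + s) := by
  simp only [Finset.sum_mul, finsetSum_coeff, mul_assoc, coeff_C_mul]
  refine Finset.sum_congr rfl fun s _ => ?_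
  rw [coeff_X_pow_mul', if_pos (by omega)]
  congr 2
  omega

variable [IsDomain R] [CharZero R]

theorem eq_zero_of_X_sub_C_pow_dvd_add_C_mul_X_pow {a c : R} (ha : a ≠ 0) {N m : ℕ} (hm : N ≤ m)
    {L : R[X]} (hL : L.degree < N) (hdvd : (X - C a) ^ (N + 1) ∣ L + C c * X ^ m) :
    c = 0 ∧ L = 0 := by
  have hc : c = 0 := by
    have hroot : (derivative^[N] (L + C c * X ^ m)).IsRoot a := by
      rw [← dvd_iff_isRoot, ← pow_one (X - C a), ← Nat.add_sub_cancel_left N 1]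
      exact pow_sub_dvd_iterate_derivative_of_pow_dvd N hdvd
    rw [iterate_map_add, iterate_derivative_eq_zero_of_degree_lt hL, iterate_derivative_C_mul,
      iterate_derivative_X_pow_eq_C_mul] at hroot
    simpa [IsRoot, ha, Nat.descFactorial_eq_zero_iff_lt, hm.not_gt] using hroot
  subst hc
  refine ⟨rfl, by_contra fun hL0 => ?_⟩
  rw [map_zero, zero_mul, add_zero] at hdvd
  have := (degree_le_of_dvd hdvd hL0).trans_lt hL
  rw [degree_pow, degree_X_sub_C, nsmul_one] at this
  exact absurd this (by norm_cast; omega)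

theorem det_hankel_coeff_X_sub_C_pow_ne_zero {a : R} (ha : a ≠ 0) (N : ℕ) :
    (Matrix.of fun s i : Fin N => ((X - C a) ^ N).coeff (i + s)).det ≠ 0 := by
  rw [Ne, ← Matrix.exists_vecMul_eq_zero_iff]
  rintro ⟨v, hv, hvM⟩
  cases N with
  | zero => exact hv (Subsingleton.elim _ _)
  | succ K =>
  set U := ∑ s, C (v s) * X ^ (K - s) with hU_def
  set S := U * (X - C a) ^ (K + 1)
  have hS_deg : S.natDegree ≤ 2 * K + 1 := by
    have hU_deg : U.natDegree ≤ K := natDegree_sum_le_of_forall_le _ _ fun s _ =>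
      (natDegree_C_mul_X_pow_le _ _).trans (Nat.sub_le K s)
    have hP := natDegree_pow_le_of_le (K + 1) (natDegree_X_sub_C_le a)
    exact natDegree_mul_le.trans (by omega)
  have hS_gap : ∀ i : Fin (K + 1), S.coeff (K + i) = 0 := fun i =>
    (coeff_sum_C_mul_X_pow_sub_mul v _ i).trans (congrFun hvM i)
  set c := S.coeff (2 * K + 1)
  have hL : (S - C c * X ^ (2 * K + 1)).degree < (K : WithBot ℕ) := by
    refine (degree_lt_iff_coeff_zero _ _).mpr fun k hk => ?_
    rw [coeff_sub, coeff_C_mul_X_pow]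
    rcases lt_trichotomy k (2 * K + 1) with hlt | rfl | hgt
    · rw [if_neg hlt.ne, sub_zero, ← Nat.add_sub_cancel' hk]
      exact hS_gap ⟨k - K, by omega⟩
    · rw [if_pos rfl, sub_self]
    · rw [if_neg hgt.ne', coeff_eq_zero_of_natDegree_lt (by omega), sub_zero]
  obtain ⟨hc, hS⟩ := eq_zero_of_X_sub_C_pow_dvd_add_C_mul_X_pow ha (N := K) (m := 2 * K + 1)
    (by omega) hL (by rw [sub_add_cancel]; exact dvd_mul_left _ _)
  rw [hc, map_zero, zero_mul, sub_zero] at hS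
  have hU : U = 0 := (mul_eq_zero.mp hS).resolve_right (pow_ne_zero (K + 1) (X_sub_C_ne_zero a))
  refine hv (_root_.funext fun t => ?_)
  rw [← coeff_sum_C_mul_X_pow_sub v t, ← hU_def, hU, coeff_zero, Pi.zero_apply]

end Polynomial

theorem relCoeff_sub_add (n : ℕ) (j : ℤ) (s i : ℕ) :
    relCoeff n (j - s) (j + i) = ((X - C 1 : ℚ[X]) ^ (2 * n)).coeff (i + s) := by
  have hk : j + i - (j - s) = ((i + s : ℕ) : ℤ) := by push_cast; ring
  rw [relCoeff, hk, Int.toNat_natCast, sub_eq_add_neg, ← C_neg, coeff_X_add_C_pow]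
  split_ifs with h
  · rw [neg_one_pow_eq_pow_mod_two, neg_one_pow_eq_pow_mod_two (2 * n - _)]
    congr 2
    omega
  · rw [Nat.choose_eq_zero_of_lt (by omega), Nat.cast_zero, mul_zero]

theorem statement15_general (n : ℕ) (j : ℤ) :
    (Matrix.of fun s i : Fin (2 * n) =>
        relCoeff n (j - (s : ℕ)) (j + (i : ℕ))).det ≠ 0 := by
  simpa only [relCoeff_sub_add] using det_hankel_coeff_X_sub_C_pow_ne_zero one_ne_zero (2 * n)

/-- Lemma 1.3, linear-algebra core: consider the set
`A = {x(j+i)·y(M-j-i) : 0 ≤ i ≤ 2n-1}` of `2n` products and the relations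
`Σ_{i=0}^{2n} (-1)^i C(2n,i) x(j'+i) y(M-j'-i) = 0` for the `2n` consecutive values
`j' = j, j-1, …, j-(2n-1)`.  The square matrix of the coefficients of the elements of
`A` in these relations is invertible over `ℚ`; hence each element of `A` can be
expressed as a `ℚ`-linear (in fact `ℤ`-linear) combination of products
`x(m)·y(m')` with `m+m' = M` outside `A`. -/
theorem statement15 (n : ℕ) (hn : 0 < n) (M j : ℤ) :
    (Matrix.of fun s i : Fin (2 * n) =>
        relCoeff n (j - (s : ℕ)) (j + (i : ℕ))).det ≠ 0 :=
  statement15_general n j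
end
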